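/- Let R be a normed ring and M a finitely generated R-module. Any two filling norms on M are equivalent: there exists C > 0 such that C⁻¹‖m‖ ≤ ‖m‖' ≤ C‖m‖ for all m ∈ M. -/

import Mathlib

variable {R : Type*} [Ring R]

/-- The ℓ¹-norm on the finitely generated based free `R`-module `Λ → R`. -/
noncomputable def l1Norm {Λ : Type*} [Fintype Λ] (ν : RingNorm R) (f : Λ → R) : ℝ :=
  ∑ x, ν (f x)

/-- The filling norm on `M` induced by a surjection `ρ : (Λ → R) → M`. -/
noncomputable def fillingNorm {Λ : Type*} [Fintype Λ] {M : Type*} [AddCommGroup M] [Module R M]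
    (ν : RingNorm R) (ρ : (Λ → R) →ₗ[R] M) (m : M) : ℝ :=
  sInf {c : ℝ | ∃ x : Λ → R, ρ x = m ∧ l1Norm ν x = c}

/-! A linear lift `T` of `ρ₁` through `ρ₂` exists because `Λ₁ → R` is free, and it is bounded
for the ℓ¹-norms by the sum of the ℓ¹-norms of the images of the basis vectors. Pushing
near-optimal preimages of `m` through `T` bounds the second filling norm by a multiple of the
first, and symmetrically. -/

section l1Norm

variable {Λ : Type*} [Fintype Λ] (ν : RingNorm R)

lemma l1Norm_nonneg (f : Λ → R) : 0 ≤ l1Norm ν f :=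
  Finset.sum_nonneg fun _ _ => apply_nonneg ν _

lemma l1Norm_zero : l1Norm ν (0 : Λ → R) = 0 := by
  simp [l1Norm]

lemma l1Norm_add_le (f g : Λ → R) : l1Norm ν (f + g) ≤ l1Norm ν f + l1Norm ν g := by
  rw [l1Norm, l1Norm, l1Norm, ← Finset.sum_add_distrib]
  exact Finset.sum_le_sum fun i _ => map_add_le_add ν (f i) (g i)

lemma l1Norm_smul_le (r : R) (f : Λ → R) : l1Norm ν (r • f) ≤ ν r * l1Norm ν f := by
  rw [l1Norm, l1Norm, Finset.mul_sum]
  exact Finset.sum_le_sum fun i _ => map_mul_le_mul ν r (f i)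

lemma l1Norm_sum_le {ι : Type*} (s : Finset ι) (f : ι → Λ → R) :
    l1Norm ν (∑ i ∈ s, f i) ≤ ∑ i ∈ s, l1Norm ν (f i) :=
  Finset.le_sum_of_subadditive _ (l1Norm_zero ν).le (l1Norm_add_le ν) s f

lemma l1Norm_map_le [DecidableEq Λ] {Λ' : Type*} [Fintype Λ'] (T : (Λ → R) →ₗ[R] (Λ' → R))
    (x : Λ → R) :
    l1Norm ν (T x) ≤ (∑ i, l1Norm ν (T (Pi.single i 1))) * l1Norm ν x := by
  have hx : T x = ∑ i, x i • T (Pi.single i 1) := by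
    conv_lhs => rw [← Finset.univ_sum_single x, map_sum]
    refine Finset.sum_congr rfl fun i _ => ?_
    rw [← map_smul, ← Pi.single_smul, smul_eq_mul, mul_one]
  have hcol : ∀ i, l1Norm ν (T (Pi.single i 1)) ≤ ∑ j, l1Norm ν (T (Pi.single j 1)) :=
    fun i => Finset.single_le_sum (f := fun j => l1Norm ν (T (Pi.single j 1)))
      (fun j _ => l1Norm_nonneg ν _) (Finset.mem_univ i)
  calc l1Norm ν (T x) ≤ ∑ i, ν (x i) * l1Norm ν (T (Pi.single i 1)) := by
        rw [hx]
        exact (l1Norm_sum_le ν _ _).trans (Finset.sum_le_sum fun i _ => l1Norm_smul_le ν _ _)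
    _ ≤ ∑ i, ν (x i) * ∑ j, l1Norm ν (T (Pi.single j 1)) :=
        Finset.sum_le_sum fun i _ => mul_le_mul_of_nonneg_left (hcol i) (apply_nonneg ν _)
    _ = (∑ j, l1Norm ν (T (Pi.single j 1))) * l1Norm ν x := by
        rw [← Finset.sum_mul, mul_comm, l1Norm]

end l1Norm

section fillingNorm

variable {Λ Λ' : Type*} [Fintype Λ] [Fintype Λ'] {M : Type*} [AddCommGroup M] [Module R M]
  (ν : RingNorm R)

lemma fillingNorm_nonneg (ρ : (Λ → R) →ₗ[R] M) (m : M) : 0 ≤ fillingNorm ν ρ m :=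
  Real.sInf_nonneg fun _ ⟨x, _, hx⟩ => hx ▸ l1Norm_nonneg ν x

lemma fillingNorm_le_l1Norm (ρ : (Λ → R) →ₗ[R] M) {x : Λ → R} {m : M} (hx : ρ x = m) :
    fillingNorm ν ρ m ≤ l1Norm ν x :=
  csInf_le ⟨0, fun _ ⟨y, _, hy⟩ => hy ▸ l1Norm_nonneg ν y⟩ ⟨x, hx, rfl⟩

lemma fillingNorm_le_mul_of_comp_eq {ρ : (Λ → R) →ₗ[R] M} (hρ : Function.Surjective ρ)
    {ρ' : (Λ' → R) →ₗ[R] M} {T : (Λ → R) →ₗ[R] (Λ' → R)} (hT : ρ' ∘ₗ T = ρ) {K : ℝ}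
    (hK : 0 < K) (hbound : ∀ x, l1Norm ν (T x) ≤ K * l1Norm ν x) (m : M) :
    fillingNorm ν ρ' m ≤ K * fillingNorm ν ρ m := by
  rw [← div_le_iff₀' hK]
  obtain ⟨x₀, hx₀⟩ := hρ m
  refine le_csInf ⟨_, x₀, hx₀, rfl⟩ ?_
  rintro _ ⟨x, hx, rfl⟩
  rw [div_le_iff₀' hK]
  have hTx : ρ' (T x) = m := by rw [← LinearMap.comp_apply, hT, hx]
  exact (fillingNorm_le_l1Norm ν ρ' hTx).trans (hbound x)

lemma exists_fillingNorm_le_mul {ρ : (Λ → R) →ₗ[R] M} (hρ : Function.Surjective ρ)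
    {ρ' : (Λ' → R) →ₗ[R] M} (hρ' : Function.Surjective ρ') :
    ∃ K : ℝ, 0 < K ∧ ∀ m, fillingNorm ν ρ' m ≤ K * fillingNorm ν ρ m := by
  classical
  obtain ⟨T, hT⟩ := Module.projective_lifting_property ρ' ρ hρ'
  set K := ∑ i, l1Norm ν (T (Pi.single i 1))
  have hK : 0 ≤ K := Finset.sum_nonneg fun _ _ => l1Norm_nonneg ν _
  refine ⟨K + 1, by linarith, fillingNorm_le_mul_of_comp_eq ν hρ hT (by linarith) fun x => ?_⟩
  calc l1Norm ν (T x) ≤ K * l1Norm ν x := l1Norm_map_le ν T x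
    _ ≤ (K + 1) * l1Norm ν x := mul_le_mul_of_nonneg_right (by linarith) (l1Norm_nonneg ν x)

end fillingNorm

/-- Any two filling norms on a finitely generated `R`-module are equivalent:
there is `C > 0` with `C⁻¹ * ‖m‖ ≤ ‖m‖' ≤ C * ‖m‖` for all `m`. -/
theorem fillingNorms_equivalent {Λ₁ Λ₂ : Type*} [Fintype Λ₁] [Fintype Λ₂]
    {M : Type*} [AddCommGroup M] [Module R M] (ν : RingNorm R)
    (ρ₁ : (Λ₁ → R) →ₗ[R] M) (hρ₁ : Function.Surjective ρ₁)
    (ρ₂ : (Λ₂ → R) →ₗ[R] M) (hρ₂ : Function.Surjective ρ₂) :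
    ∃ C : ℝ, 0 < C ∧ ∀ m : M,
      C⁻¹ * fillingNorm ν ρ₁ m ≤ fillingNorm ν ρ₂ m ∧
      fillingNorm ν ρ₂ m ≤ C * fillingNorm ν ρ₁ m := by
  obtain ⟨K₁, hK₁, h₁₂⟩ := exists_fillingNorm_le_mul ν hρ₁ hρ₂
  obtain ⟨K₂, hK₂, h₂₁⟩ := exists_fillingNorm_le_mul ν hρ₂ hρ₁
  have hC : 0 < max K₁ K₂ := lt_max_of_lt_left hK₁
  refine ⟨max K₁ K₂, hC, fun m => ⟨?_, ?_⟩⟩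
  · rw [inv_mul_le_iff₀ hC]
    calc fillingNorm ν ρ₁ m ≤ K₂ * fillingNorm ν ρ₂ m := h₂₁ m
      _ ≤ max K₁ K₂ * fillingNorm ν ρ₂ m :=
        mul_le_mul_of_nonneg_right (le_max_right _ _) (fillingNorm_nonneg ν ρ₂ m)
  · calc fillingNorm ν ρ₂ m ≤ K₁ * fillingNorm ν ρ₁ m := h₁₂ m
      _ ≤ max K₁ K₂ * fillingNorm ν ρ₁ m :=
        mul_le_mul_of_nonneg_right (le_max_left _ _) (fillingNorm_nonneg ν ρ₁ m)
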